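/- arXiv:1503.05988 — 2 statements merged into one kernel-verified Lean document; each statement's English description precedes it below -/
import Mathlib

section
/- Let λ be a finitely supported distribution on states of nature with n actions and all payoffs in [−1,1], let OPT be the maximum expected sender utility over incentive-compatible direct schemes for λ, and let ε > 0. If θ_1, …, θ_K are drawn i.i.d. from λ with K ≥ (256 n²/ε⁴)·log(4n/ε), then the expectation over the samples of the optimal value of the relaxed empirical program—maximize (1/K) Σ_{k=1}^K Σ_{i=1}^n φ̃(θ_k,σ_i) s_i(θ_k) over schemes φ̃ on indices [K] satisfying Σ_i φ̃(θ_k,σ_i) = 1 and φ̃(θ_k,σ_i) ≥ 0 for all k, i, and (1/K) Σ_k φ̃(θ_k,σ_i) r_i(θ_k) ≥ (1/K) Σ_k φ̃(θ_k,σ_i)(r_j(θ_k) − ε) for all i, j—is at least OPT − ε. -/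
open Finset

namespace Persuasion

variable {Θ : Type*} [Fintype Θ] {n : ℕ}

/-- `μ` is a probability distribution on the finite type `Θ`. -/
def IsDist (μ : Θ → ℝ) : Prop := (∀ θ, 0 ≤ μ θ) ∧ ∑ θ, μ θ = 1

/-- a direct signaling scheme: a probability distribution over the `n` signals
(signal `i` recommending action `i`) for each state -/
def IsScheme (φ : Θ → Fin n → ℝ) : Prop :=
  (∀ θ i, 0 ≤ φ θ i) ∧ ∀ θ, ∑ i, φ θ i = 1

/-- `ε`-incentive compatibility of a direct scheme for the distribution `μ`
(`ε = 0` gives exact incentive compatibility) -/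
def EIC (μ : Θ → ℝ) (r : Θ → Fin n → ℝ) (ε : ℝ) (φ : Θ → Fin n → ℝ) : Prop :=
  ∀ i j : Fin n,
    ∑ θ, μ θ * φ θ i * (r θ j - ε) ≤ ∑ θ, μ θ * φ θ i * r θ i

/-- expected sender utility of a direct scheme under `μ`, assuming the receiver
follows the recommendations -/
def senderUtil (μ : Θ → ℝ) (s : Θ → Fin n → ℝ) (φ : Θ → Fin n → ℝ) : ℝ :=
  ∑ θ, ∑ i, μ θ * φ θ i * s θ i

end Persuasion

open Persuasion

section Helpers
variable {Θ : Type*} [Fintype Θ]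

lemma exp_quad {y : ℝ} (hy : y ≤ 1) : Real.exp y ≤ 1 + y + (3/4) * y^2 := by
  rcases le_or_gt (-1) y with h | h
  · have hb := Real.exp_bound (x := y) (by rw [abs_le]; exact ⟨h, hy⟩) (n := 2) (by norm_num)
    have h2 : ∑ m ∈ Finset.range 2, y ^ m / m.factorial = 1 + y := by
      simp [Finset.sum_range_succ]
    rw [h2] at hb
    have h3 := (abs_le.1 hb).2
    have hy2 : |y| ^ 2 = y ^ 2 := sq_abs y
    rw [hy2] at h3
    norm_num at h3 ⊢
    nlinarith
  · have h1 : Real.exp y ≤ Real.exp (-1) := Real.exp_le_exp.2 (le_of_lt h)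
    have h2 : Real.exp (-1) ≤ 1/2 := by
      rw [Real.exp_neg]
      have : (2:ℝ) ≤ Real.exp 1 := by have := Real.add_one_le_exp (1:ℝ); linarith
      rw [inv_le_comm₀ (by positivity) (by norm_num)]
      linarith
    nlinarith [sq_nonneg y, sq_nonneg (y+1)]

lemma sum_prod_pow (K : ℕ) (g : Θ → ℝ) :
    ∑ v : Fin K → Θ, ∏ k, g (v k) = (∑ θ, g θ) ^ K := by
  classical
  have h := Finset.prod_univ_sum (fun _ : Fin K => (univ : Finset Θ)) (fun _ θ => g θ)
  rw [Fintype.piFinset_univ] at h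
  rw [← h]
  simp

lemma prod_fun_sum (K : ℕ) (g : Fin K → Θ → ℝ) :
    ∑ v : Fin K → Θ, ∏ k, g k (v k) = ∏ k, ∑ θ, g k θ := by
  classical
  have h := Finset.prod_univ_sum (fun _ : Fin K => (univ : Finset Θ)) g
  rw [Fintype.piFinset_univ] at h
  rw [← h]

lemma marg {K : ℕ} (lam : Θ → ℝ) (hsum : ∑ θ, lam θ = 1)
    (k : Fin K) (h : Θ → ℝ) :
    ∑ v : Fin K → Θ, (∏ l, lam (v l)) * h (v k) = ∑ θ, lam θ * h θ := by
  classical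
  have e1 : ∀ v : Fin K → Θ,
      (∏ l, lam (v l)) * h (v k) = ∏ l, (lam (v l) * (if l = k then h (v l) else 1)) := by
    intro v
    rw [Finset.prod_mul_distrib]
    congr 1
    simp [Finset.prod_ite_eq']
  calc ∑ v : Fin K → Θ, (∏ l, lam (v l)) * h (v k)
      = ∑ v : Fin K → Θ, ∏ l, (lam (v l) * (if l = k then h (v l) else 1)) :=
        Finset.sum_congr rfl fun v _ => e1 v
    _ = ∏ l : Fin K, ∑ θ, lam θ * (if l = k then h θ else 1) :=
        prod_fun_sum K (fun l θ => lam θ * (if l = k then h θ else 1))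
    _ = ∑ θ, lam θ * h θ := by
        have e2 : ∀ l : Fin K, (∑ θ, lam θ * (if l = k then h θ else 1))
            = if l = k then ∑ θ, lam θ * h θ else 1 := by
          intro l
          by_cases hl : l = k <;> simp [hl, hsum]
        rw [Finset.prod_congr rfl fun l _ => e2 l]
        simp [Finset.prod_ite_eq']

lemma chernoff (lam : Θ → ℝ) (hlam0 : ∀ θ, 0 ≤ lam θ)
    (hlam1 : ∑ θ, lam θ = 1)
    (W : Θ → ℝ) (ε mm : ℝ) (hε : 0 < ε) (hε2 : ε ≤ 2) (hW2 : ∀ θ, W θ ≤ 2)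
    (hmean : ∑ θ, lam θ * W θ ≤ -(ε * mm))
    (hvar : ∑ θ, lam θ * (W θ)^2 ≤ (2+ε)^2 * mm) (K : ℕ) :
    ∑ v ∈ Finset.univ.filter (fun v : Fin K → Θ => 0 < ∑ k, W (v k)), ∏ k, lam (v k)
      ≤ Real.exp (-((K : ℝ) * (ε^2/(3*(2+ε)^2)) * mm)) := by
  classical
  set lam0 : ℝ := 2*ε/(3*(2+ε)^2) with hl0
  have hden : (0:ℝ) < (2+ε)^2 := by nlinarith
  have hl0pos : 0 < lam0 := by positivity
  have hl0small : ∀ θ, lam0 * W θ ≤ 1 := by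
    intro θ
    have h4 : (4:ℝ) ≤ (2+ε)^2 := by nlinarith
    have h5 : lam0 * W θ ≤ lam0 * 2 :=
      mul_le_mul_of_nonneg_left (hW2 θ) (le_of_lt hl0pos)
    have hl0le : lam0 ≤ 1/3 := by
      rw [hl0, div_le_iff₀ (by positivity)]
      nlinarith
    nlinarith
  set x : ℝ := ε^2/(3*(2+ε)^2) * mm with hx
  have hG : ∑ θ, lam θ * Real.exp (lam0 * W θ) ≤ 1 - x := by
    have step : ∀ θ, lam θ * Real.exp (lam0 * W θ)
        ≤ lam θ * (1 + lam0 * W θ + (3/4) * (lam0 * W θ)^2) := fun θ =>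
      mul_le_mul_of_nonneg_left (exp_quad (hl0small θ)) (hlam0 θ)
    calc ∑ θ, lam θ * Real.exp (lam0 * W θ)
        ≤ ∑ θ, lam θ * (1 + lam0 * W θ + (3/4) * (lam0 * W θ)^2) :=
          Finset.sum_le_sum fun θ _ => step θ
      _ = (∑ θ, lam θ) + lam0 * (∑ θ, lam θ * W θ)
            + (3/4) * lam0^2 * (∑ θ, lam θ * (W θ)^2) := by
          rw [Finset.mul_sum, Finset.mul_sum, ← Finset.sum_add_distrib, ← Finset.sum_add_distrib]
          exact Finset.sum_congr rfl fun θ _ => by ring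
      _ = 1 + lam0 * (∑ θ, lam θ * W θ) + (3/4) * lam0^2 * (∑ θ, lam θ * (W θ)^2) := by
          rw [hlam1]
      _ ≤ 1 + lam0 * (-(ε*mm)) + (3/4) * lam0^2 * ((2+ε)^2 * mm) := by
          have h1 : lam0 * (∑ θ, lam θ * W θ) ≤ lam0 * (-(ε*mm)) :=
            mul_le_mul_of_nonneg_left hmean (le_of_lt hl0pos)
          have h2 : (3/4) * lam0^2 * (∑ θ, lam θ * (W θ)^2)
              ≤ (3/4) * lam0^2 * ((2+ε)^2 * mm) :=
            mul_le_mul_of_nonneg_left hvar (by positivity)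
          linarith
      _ = 1 - x := by
          rw [hl0, hx]
          field_simp
          ring
  have hGnn : 0 ≤ ∑ θ, lam θ * Real.exp (lam0 * W θ) :=
    Finset.sum_nonneg fun θ _ => mul_nonneg (hlam0 θ) (Real.exp_nonneg _)
  have hGexp : ∑ θ, lam θ * Real.exp (lam0 * W θ) ≤ Real.exp (-x) := by
    have := Real.add_one_le_exp (-x)
    linarith
  calc ∑ v ∈ Finset.univ.filter (fun v : Fin K → Θ => 0 < ∑ k, W (v k)), ∏ k, lam (v k)
      ≤ ∑ v ∈ Finset.univ.filter (fun v : Fin K → Θ => 0 < ∑ k, W (v k)),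
          (∏ k, lam (v k)) * Real.exp (lam0 * ∑ k, W (v k)) := by
        apply Finset.sum_le_sum
        intro v hv
        have hv' : 0 < ∑ k, W (v k) := (Finset.mem_filter.1 hv).2
        have h1 : (1:ℝ) ≤ Real.exp (lam0 * ∑ k, W (v k)) := by
          rw [Real.one_le_exp_iff]
          positivity
        have hp : 0 ≤ ∏ k, lam (v k) := Finset.prod_nonneg fun k _ => hlam0 _
        nlinarith
    _ ≤ ∑ v : Fin K → Θ, (∏ k, lam (v k)) * Real.exp (lam0 * ∑ k, W (v k)) := by
        apply Finset.sum_le_sum_of_subset_of_nonneg (Finset.filter_subset _ _)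
        intro v _ _
        have hp : 0 ≤ ∏ k, lam (v k) := Finset.prod_nonneg fun k _ => hlam0 _
        positivity
    _ = ∑ v : Fin K → Θ, ∏ k, (lam (v k) * Real.exp (lam0 * W (v k))) := by
        apply Finset.sum_congr rfl
        intro v _
        rw [Finset.prod_mul_distrib, Finset.mul_sum, Real.exp_sum]
    _ = (∑ θ, lam θ * Real.exp (lam0 * W θ)) ^ K :=
        sum_prod_pow K (fun θ => lam θ * Real.exp (lam0 * W θ))
    _ ≤ (Real.exp (-x)) ^ K := pow_le_pow_left₀ hGnn hGexp K
    _ = Real.exp (-((K : ℝ) * (ε^2/(3*(2+ε)^2)) * mm)) := by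
        rw [← Real.exp_nat_mul]
        congr 1
        rw [hx]; ring

end Helpers


set_option maxHeartbeats 1600000 in
/-- if `θ_1, …, θ_K` are drawn i.i.d. from `lam` with
`K ≥ (256 n²/ε⁴)·log(4n/ε)`, then the expected optimal value of the relaxed empirical
signaling program (the optimal `ε`-incentive-compatible signaling problem on the
uniform distribution over the sampled indices) is at least `OPT − ε`. -/
theorem empirical_lp_value_near_optimal
    {Θ : Type*} [Fintype Θ] {n : ℕ}
    (lam : Θ → ℝ) (hlam : IsDist lam)
    (s r : Θ → Fin n → ℝ)
    (hs : ∀ θ i, s θ i ∈ Set.Icc (-1 : ℝ) 1) (hr : ∀ θ i, r θ i ∈ Set.Icc (-1 : ℝ) 1)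
    (ε : ℝ) (hε : 0 < ε)
    (OPT : ℝ)
    (hOPT : IsGreatest {u : ℝ | ∃ φ : Θ → Fin n → ℝ,
      IsScheme φ ∧ EIC lam r 0 φ ∧ u = senderUtil lam s φ} OPT)
    (K : ℕ) (hK : 256 * n ^ 2 / ε ^ 4 * Real.log (4 * n / ε) ≤ (K : ℝ))
    -- `val v` is the optimal value of the relaxed empirical program on the sample `v`:
    (val : (Fin K → Θ) → ℝ)
    (hval : ∀ v : Fin K → Θ,
      IsGreatest {u : ℝ | ∃ φ : Fin K → Fin n → ℝ,
        (∀ k i, 0 ≤ φ k i) ∧ (∀ k, ∑ i, φ k i = 1) ∧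
        (∀ i j : Fin n,
          (1 / (K : ℝ)) * ∑ k, φ k i * (r (v k) j - ε) ≤
            (1 / (K : ℝ)) * ∑ k, φ k i * r (v k) i) ∧
        u = (1 / (K : ℝ)) * ∑ k, ∑ i, φ k i * s (v k) i} (val v)) :
    OPT - ε ≤ ∑ v : Fin K → Θ, (∏ k, lam (v k)) * val v := by
  classical
  obtain ⟨hlam0, hlam1⟩ := hlam
  obtain ⟨φs, ⟨hφs0, hφs1⟩, hφsIC, hOPTeq⟩ := hOPT.1
  have hΘ : Nonempty Θ := by
    by_contra h
    rw [not_nonempty_iff] at h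
    rw [Finset.univ_eq_empty, Finset.sum_empty] at hlam1
    norm_num at hlam1
  have hn1 : 1 ≤ n := by
    by_contra h
    push_neg at h
    interval_cases n
    obtain ⟨θ0⟩ := hΘ
    have := hφs1 θ0
    simp at this
  have hnR : (1:ℝ) ≤ n := by exact_mod_cast hn1
  have hOPT1 : OPT ≤ 1 := by
    rw [hOPTeq]
    show ∑ θ, ∑ i, lam θ * φs θ i * s θ i ≤ 1
    calc ∑ θ, ∑ i, lam θ * φs θ i * s θ i
        ≤ ∑ θ, ∑ i, lam θ * φs θ i := by
          apply Finset.sum_le_sum; intro θ _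
          apply Finset.sum_le_sum; intro i _
          have h1 : 0 ≤ lam θ * φs θ i := mul_nonneg (hlam0 θ) (hφs0 θ i)
          nlinarith [(hs θ i).2]
      _ = ∑ θ, lam θ := by
          apply Finset.sum_congr rfl; intro θ _
          rw [← Finset.mul_sum, hφs1 θ, mul_one]
      _ = 1 := hlam1
  by_cases hK0 : K = 0
  · subst hK0
    have hL : Real.log (4 * n / ε) ≤ 0 := by
      by_contra h
      push_neg at h
      have hc : (0:ℝ) < 256 * n ^ 2 / ε ^ 4 := by positivity
      have : (0:ℝ) < 256 * n ^ 2 / ε ^ 4 * Real.log (4 * n / ε) := mul_pos hc h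
      simp only [Nat.cast_zero] at hK
      linarith
    have h4n : 4 * (n:ℝ) / ε ≤ 1 := by
      rwa [Real.log_nonpos_iff (by positivity)] at hL
    have hε4 : 4 ≤ ε := by
      rw [div_le_one hε] at h4n
      linarith
    have hval0 : ∀ v : Fin 0 → Θ, val v = 0 := by
      intro v
      obtain ⟨φ, _, _, _, hu⟩ := (hval v).1
      simpa using hu
    have : ∑ v : Fin 0 → Θ, (∏ k, lam (v k)) * val v = 0 := by
      apply Finset.sum_eq_zero
      intro v _
      rw [hval0 v, mul_zero]
    rw [this]
    linarith
  have hK1 : 1 ≤ K := Nat.one_le_iff_ne_zero.2 hK0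
  have hKR : (0:ℝ) < (K:ℝ) := by exact_mod_cast Nat.pos_of_ne_zero hK0
  have hw0 : ∀ v : Fin K → Θ, 0 ≤ ∏ k, lam (v k) :=
    fun v => Finset.prod_nonneg fun k _ => hlam0 _
  -- feasibility implies val lower bound
  have hval_ge : ∀ (ψ : Θ → Fin n → ℝ), (∀ θ i, 0 ≤ ψ θ i) → (∀ θ, ∑ i, ψ θ i = 1) →
      ∀ v : Fin K → Θ, (∀ i j, ∑ k, ψ (v k) i * (r (v k) j - r (v k) i - ε) ≤ 0) →
      (1/(K:ℝ)) * ∑ k, ∑ i, ψ (v k) i * s (v k) i ≤ val v := by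
    intro ψ h0 h1 v hic
    apply (hval v).2
    refine ⟨fun k => ψ (v k), fun k i => h0 _ _, fun k => h1 _, ?_, rfl⟩
    intro i j
    have h2 := hic i j
    have h3 : ∑ k, ψ (v k) i * (r (v k) j - ε) ≤ ∑ k, ψ (v k) i * r (v k) i := by
      have h4 : ∑ k, (ψ (v k) i * (r (v k) j - ε) - ψ (v k) i * r (v k) i) ≤ 0 :=
        le_of_eq_of_le (Finset.sum_congr rfl fun k _ => by ring) h2
      rw [Finset.sum_sub_distrib] at h4
      linarith
    exact mul_le_mul_of_nonneg_left h3 (by positivity)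
  have hval_neg1 : ∀ v : Fin K → Θ, -1 ≤ val v := by
    intro v
    obtain ⟨φ, h0, h1, _, hu⟩ := (hval v).1
    have hin : ∀ k : Fin K, -1 ≤ ∑ i, φ k i * s (v k) i := by
      intro k
      calc (-1:ℝ) = ∑ i, φ k i * (-1) := by
            rw [← Finset.sum_mul, h1 k]; ring
        _ ≤ ∑ i, φ k i * s (v k) i :=
            Finset.sum_le_sum fun i _ => mul_le_mul_of_nonneg_left (hs _ i).1 (h0 k i)
    have h2 : (-(K:ℝ)) ≤ ∑ k, ∑ i, φ k i * s (v k) i := by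
      calc -(K:ℝ) = ∑ _k : Fin K, (-1 : ℝ) := by simp
        _ ≤ _ := Finset.sum_le_sum fun k _ => hin k
    rw [hu]
    calc (-1:ℝ) = (1/(K:ℝ)) * (-(K:ℝ)) := by field_simp
      _ ≤ (1/(K:ℝ)) * ∑ k, ∑ i, φ k i * s (v k) i :=
          mul_le_mul_of_nonneg_left h2 (by positivity)
  -- expectation of empirical utility
  have hexp_util : ∀ h : Θ → ℝ,
      ∑ v : Fin K → Θ, (∏ l, lam (v l)) * ((1/(K:ℝ)) * ∑ k, h (v k))
        = ∑ θ, lam θ * h θ := by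
    intro h
    have e : ∀ v : Fin K → Θ, (∏ l, lam (v l)) * ((1/(K:ℝ)) * ∑ k, h (v k))
        = (1/(K:ℝ)) * ∑ k, (∏ l, lam (v l)) * h (v k) := by
      intro v
      rw [← Finset.mul_sum]
      ring
    rw [Finset.sum_congr rfl fun v _ => e v, ← Finset.mul_sum, Finset.sum_comm]
    rw [Finset.sum_congr rfl fun k (_ : k ∈ (univ : Finset (Fin K))) => marg lam hlam1 k h]
    rw [Finset.sum_const, Finset.card_univ, Fintype.card_fin, nsmul_eq_mul]
    field_simp
  -- convert senderUtil to lam-weighted form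
  have hsu : ∀ ψ : Θ → Fin n → ℝ,
      senderUtil lam s ψ = ∑ θ, lam θ * (∑ i, ψ θ i * s θ i) := by
    intro ψ
    apply Finset.sum_congr rfl
    intro θ _
    rw [Finset.mul_sum]
    exact Finset.sum_congr rfl fun i _ => by ring
  by_cases hcase : ε < 2 ∧ 2 ≤ n
  case neg =>
    -- easy case : ε ≥ 2 or n = 1 ; the optimal scheme is always empirically feasible
    rw [not_and_or] at hcase
    push_neg at hcase
    have hfeas : ∀ (v : Fin K → Θ) (i j : Fin n),
        ∑ k, φs (v k) i * (r (v k) j - r (v k) i - ε) ≤ 0 := by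
      intro v i j
      apply Finset.sum_nonpos
      intro k _
      have hd : r (v k) j - r (v k) i - ε ≤ 0 := by
        rcases hcase with h2 | h2
        · nlinarith [(hr (v k) j).2, (hr (v k) i).1]
        · have hij : i = j := by
            have : n = 1 := le_antisymm (by omega) hn1
            subst this
            exact Subsingleton.elim i j
          rw [hij]
          linarith
      nlinarith [hφs0 (v k) i]
    have hbound : ∀ v : Fin K → Θ,
        (∏ l, lam (v l)) * ((1/(K:ℝ)) * ∑ k, (∑ i, φs (v k) i * s (v k) i))
          ≤ (∏ l, lam (v l)) * val v := by
      intro v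
      exact mul_le_mul_of_nonneg_left (hval_ge φs hφs0 hφs1 v (hfeas v)) (hw0 v)
    have hmain := Finset.sum_le_sum fun v (_ : v ∈ (univ : Finset (Fin K → Θ))) => hbound v
    rw [hexp_util (fun θ => ∑ i, φs θ i * s θ i)] at hmain
    rw [hsu φs] at hOPTeq
    linarith
  case pos =>
  obtain ⟨hε2, hn2⟩ := hcase
  have hn2R : (2:ℝ) ≤ n := by exact_mod_cast hn2
  -- main case : ε < 2 and n ≥ 2
  set m : Fin n → ℝ := fun i => ∑ θ, lam θ * φs θ i with hm
  set m0 : ℝ := 3*ε^2/(8*(n:ℝ)^2) with hm0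
  have hm0pos : 0 < m0 := by positivity
  set S : Finset (Fin n) := univ.filter (fun i => m0 ≤ m i) with hS
  have hbr' : ∀ θ : Θ, ∃ i : Fin n, ∀ j, r θ j ≤ r θ i := by
    intro θ
    have : Nonempty (Fin n) := ⟨⟨0, by omega⟩⟩
    exact Finite.exists_max (r θ)
  choose br hbr using hbr'
  set small : Θ → ℝ := fun θ => ∑ i ∈ Sᶜ, φs θ i with hsmalldef
  set φ' : Θ → Fin n → ℝ :=
    fun θ i => (if i ∈ S then φs θ i else 0) + small θ * (if br θ = i then 1 else 0) with hφ'
  have hsmall0 : ∀ θ, 0 ≤ small θ := fun θ => Finset.sum_nonneg fun i _ => hφs0 θ i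
  have hsmall1 : ∀ θ, small θ ≤ 1 := by
    intro θ
    calc small θ ≤ ∑ i, φs θ i :=
          Finset.sum_le_sum_of_subset_of_nonneg (Finset.subset_univ _)
            (fun i _ _ => hφs0 θ i)
      _ = 1 := hφs1 θ
  have hφ'0 : ∀ θ i, 0 ≤ φ' θ i := by
    intro θ i
    apply add_nonneg
    · split
      · exact hφs0 θ i
      · exact le_refl 0
    · exact mul_nonneg (hsmall0 θ) (by split <;> norm_num)
  have hφ'sum : ∀ θ, ∑ i, φ' θ i = 1 := by
    intro θ
    rw [Finset.sum_add_distrib]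
    have e1 : ∑ i, (if i ∈ S then φs θ i else 0) = ∑ i ∈ S, φs θ i := by
      rw [Finset.sum_ite_mem, Finset.univ_inter]
    have e2 : ∑ i, small θ * (if br θ = i then 1 else 0) = small θ := by
      rw [← Finset.mul_sum, Finset.sum_ite_eq]
      simp
    rw [e1, e2, hsmalldef]
    rw [Finset.sum_add_sum_compl S (φs θ)]
    exact hφs1 θ
  have hφ'le1 : ∀ θ i, φ' θ i ≤ 1 := by
    intro θ i
    have := Finset.single_le_sum (f := φ' θ) (fun j _ => hφ'0 θ j) (Finset.mem_univ i)
    rw [hφ'sum θ] at this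
    exact this
  -- exact IC of φ'
  have hφ'IC : ∀ i j : Fin n, 0 ≤ ∑ θ, lam θ * φ' θ i * (r θ i - r θ j) := by
    intro i j
    have expand : ∀ θ, lam θ * φ' θ i * (r θ i - r θ j)
        = lam θ * (if i ∈ S then φs θ i else 0) * (r θ i - r θ j)
          + lam θ * (small θ * (if br θ = i then 1 else 0)) * (r θ i - r θ j) := by
      intro θ
      rw [hφ']
      ring
    rw [Finset.sum_congr rfl fun θ _ => expand θ, Finset.sum_add_distrib]
    apply add_nonneg
    · by_cases hiS : i ∈ S
      · simp only [hiS, if_true]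
        have h0 := hφsIC i j
        have h1 : ∑ θ, lam θ * φs θ i * (r θ j - 0) = ∑ θ, lam θ * φs θ i * r θ j := by
          apply Finset.sum_congr rfl; intro θ _; ring
        rw [h1] at h0
        have h2 : ∑ θ, lam θ * φs θ i * (r θ i - r θ j)
            = (∑ θ, lam θ * φs θ i * r θ i) - ∑ θ, lam θ * φs θ i * r θ j := by
          rw [← Finset.sum_sub_distrib]
          apply Finset.sum_congr rfl; intro θ _; ring
        rw [h2]
        linarith
      · simp only [hiS, if_false]
        simp
    · apply Finset.sum_nonneg
      intro θ _
      by_cases hb : br θ = i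
      · simp only [hb, if_true, mul_one]
        have := hbr θ j
        rw [← hb]
        have h3 : 0 ≤ r θ (br θ) - r θ j := by linarith [hbr θ j]
        have h4 : 0 ≤ lam θ * small θ := mul_nonneg (hlam0 θ) (hsmall0 θ)
        nlinarith
      · simp [hb]
  -- masses of signals in S
  have hφ'm : ∀ i ∈ S, m0 ≤ ∑ θ, lam θ * φ' θ i := by
    intro i hiS
    have h1 : m i ≤ ∑ θ, lam θ * φ' θ i := by
      apply Finset.sum_le_sum
      intro θ _
      rw [hφ']
      simp only [hiS, if_true]
      have : 0 ≤ lam θ * (small θ * (if br θ = i then 1 else 0)) :=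
        mul_nonneg (hlam0 θ) (mul_nonneg (hsmall0 θ) (by split <;> norm_num))
      nlinarith [hlam0 θ]
    have h2 : m0 ≤ m i := (Finset.mem_filter.1 hiS).2
    linarith
  -- utility of φ' close to OPT
  set Hp : Θ → ℝ := fun θ => ∑ i, φ' θ i * s θ i with hHpdef
  have hHpeq : ∀ θ, Hp θ = (∑ i ∈ S, φs θ i * s θ i) + small θ * s θ (br θ) := by
    intro θ
    have e : ∀ i : Fin n, φ' θ i * s θ i
        = (if i ∈ S then φs θ i * s θ i else 0)
          + small θ * (if br θ = i then s θ i else 0) := by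
      intro i
      by_cases h1 : i ∈ S <;> by_cases h2 : br θ = i <;> simp [hφ', h1, h2] <;> ring
    rw [hHpdef]
    simp only
    rw [Finset.sum_congr rfl fun i _ => e i, Finset.sum_add_distrib]
    congr 1
    · rw [Finset.sum_ite_mem, Finset.univ_inter]
    · rw [← Finset.mul_sum, Finset.sum_ite_eq]
      simp
  have hHple1 : ∀ θ, Hp θ ≤ 1 := by
    intro θ
    have h1 : Hp θ ≤ ∑ i, φ' θ i := by
      apply Finset.sum_le_sum
      intro i _
      nlinarith [hφ'0 θ i, (hs θ i).2]
    rw [hφ'sum θ] at h1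
    exact h1
  have hutil : OPT - 2*(n:ℝ)*m0 ≤ ∑ θ, lam θ * Hp θ := by
    have hptws : ∀ θ, (∑ i, φs θ i * s θ i) - 2 * small θ ≤ Hp θ := by
      intro θ
      rw [hHpeq θ]
      have hsplit : ∑ i, φs θ i * s θ i
          = (∑ i ∈ S, φs θ i * s θ i) + ∑ i ∈ Sᶜ, φs θ i * s θ i :=
        (Finset.sum_add_sum_compl S _).symm
      have hb1 : -(small θ) ≤ small θ * s θ (br θ) := by
        nlinarith [hsmall0 θ, (hs θ (br θ)).1, (hs θ (br θ)).2]
      have hb2 : ∑ i ∈ Sᶜ, φs θ i * s θ i ≤ small θ := by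
        rw [hsmalldef]
        simp only
        apply Finset.sum_le_sum
        intro i _
        nlinarith [hφs0 θ i, (hs θ i).2]
      linarith
    have h1 : ∑ θ, lam θ * ((∑ i, φs θ i * s θ i) - 2 * small θ) ≤ ∑ θ, lam θ * Hp θ :=
      Finset.sum_le_sum fun θ _ => mul_le_mul_of_nonneg_left (hptws θ) (hlam0 θ)
    have h2 : ∑ θ, lam θ * ((∑ i, φs θ i * s θ i) - 2 * small θ)
        = (∑ θ, lam θ * (∑ i, φs θ i * s θ i)) - 2 * ∑ θ, lam θ * small θ := by
      rw [Finset.mul_sum, ← Finset.sum_sub_distrib]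
      exact Finset.sum_congr rfl fun θ _ => by ring
    have h3 : ∑ θ, lam θ * small θ = ∑ i ∈ Sᶜ, m i := by
      have e : ∀ θ : Θ, lam θ * small θ = ∑ i ∈ Sᶜ, lam θ * φs θ i := by
        intro θ
        rw [hsmalldef]
        exact Finset.mul_sum _ _ _
      rw [Finset.sum_congr rfl fun θ _ => e θ, Finset.sum_comm]
    have h4 : ∑ i ∈ Sᶜ, m i ≤ (n:ℝ) * m0 := by
      have h5 : ∑ i ∈ Sᶜ, m i ≤ Sᶜ.card • m0 := by
        apply Finset.sum_le_card_nsmul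
        intro i hi
        have := Finset.mem_compl.1 hi
        rw [hS, Finset.mem_filter] at this
        push_neg at this
        exact le_of_lt (this (Finset.mem_univ i))
      have h6 : (Sᶜ.card : ℝ) ≤ n := by
        have h6' : Sᶜ.card ≤ Fintype.card (Fin n) := Finset.card_le_univ Sᶜ
        rw [Fintype.card_fin] at h6'
        exact_mod_cast h6'
      rw [nsmul_eq_mul] at h5
      calc ∑ i ∈ Sᶜ, m i ≤ (Sᶜ.card : ℝ) * m0 := h5
        _ ≤ (n:ℝ) * m0 := mul_le_mul_of_nonneg_right h6 (le_of_lt hm0pos)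
    have h7 : OPT = ∑ θ, lam θ * (∑ i, φs θ i * s θ i) := by rw [hOPTeq, hsu φs]
    linarith
  -- per-constraint Chernoff bound
  have hL : 0 < Real.log (4*(n:ℝ)/ε) := by
    apply Real.log_pos
    rw [lt_div_iff₀ hε, one_mul]
    linarith
  have hij : ∀ i ∈ S, ∀ j : Fin n,
      ∑ v ∈ Finset.univ.filter
        (fun v : Fin K → Θ => 0 < ∑ k, φ' (v k) i * (r (v k) j - r (v k) i - ε)),
          ∏ k, lam (v k) ≤ ε^2/(16*(n:ℝ)^2) := by
    intro i hiS j
    set W : Θ → ℝ := fun θ => φ' θ i * (r θ j - r θ i - ε) with hWdef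
    set mm : ℝ := ∑ θ, lam θ * φ' θ i with hmmdef
    have hmm0 : m0 ≤ mm := hφ'm i hiS
    have hW2 : ∀ θ, W θ ≤ 2 := by
      intro θ
      rw [hWdef]
      simp only
      rcases le_or_gt (r θ j - r θ i - ε) 0 with h | h
      · nlinarith [hφ'0 θ i]
      · nlinarith [hφ'le1 θ i, hφ'0 θ i, (hr θ j).2, (hr θ i).1]
    have hmean : ∑ θ, lam θ * W θ ≤ -(ε * mm) := by
      have e : ∑ θ, lam θ * W θ
          = -(∑ θ, lam θ * φ' θ i * (r θ i - r θ j)) - ε * mm := by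
        rw [hmmdef, Finset.mul_sum, ← Finset.sum_neg_distrib, ← Finset.sum_sub_distrib]
        apply Finset.sum_congr rfl
        intro θ _
        rw [hWdef]
        ring
      rw [e]
      have := hφ'IC i j
      linarith
    have hvar : ∑ θ, lam θ * (W θ)^2 ≤ (2+ε)^2 * mm := by
      have e : ∀ θ, lam θ * (W θ)^2 ≤ (2+ε)^2 * (lam θ * φ' θ i) := by
        intro θ
        rw [hWdef]
        simp only
        have h1 := hφ'0 θ i
        have h2 := hφ'le1 θ i
        have h3 : (r θ j - r θ i - ε)^2 ≤ (2+ε)^2 := by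
          nlinarith [(hr θ j).1, (hr θ j).2, (hr θ i).1, (hr θ i).2]
        have h4 : (φ' θ i * (r θ j - r θ i - ε))^2 ≤ (2+ε)^2 * φ' θ i := by
          have h5 : (φ' θ i)^2 * (r θ j - r θ i - ε)^2 ≤ (φ' θ i)^2 * (2+ε)^2 :=
            mul_le_mul_of_nonneg_left h3 (sq_nonneg _)
          have h5b : (φ' θ i)^2 ≤ φ' θ i := by nlinarith
          have h5c : (φ' θ i)^2 * (2+ε)^2 ≤ φ' θ i * (2+ε)^2 :=
            mul_le_mul_of_nonneg_right h5b (sq_nonneg (2+ε))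
          nlinarith [h5, h5c]
        have h6 : lam θ * (φ' θ i * (r θ j - r θ i - ε))^2
            ≤ lam θ * ((2+ε)^2 * φ' θ i) := mul_le_mul_of_nonneg_left h4 (hlam0 θ)
        nlinarith
      calc ∑ θ, lam θ * (W θ)^2 ≤ ∑ θ, (2+ε)^2 * (lam θ * φ' θ i) :=
            Finset.sum_le_sum fun θ _ => e θ
        _ = (2+ε)^2 * mm := by rw [hmmdef, Finset.mul_sum]
    have hch := chernoff lam hlam0 hlam1 W ε mm hε (le_of_lt hε2) hW2 hmean hvar K
    have hexpo : 2 * Real.log (4*(n:ℝ)/ε) ≤ (K:ℝ) * (ε^2/(3*(2+ε)^2)) * mm := by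
      have hc1 : ε^2/48 ≤ ε^2/(3*(2+ε)^2) := by
        apply div_le_div_of_nonneg_left (by positivity) (by positivity)
        nlinarith
      have hKB : 256 * (n:ℝ)^2/ε^4 * Real.log (4*(n:ℝ)/ε) ≤ (K:ℝ) := hK
      have hKpos : (0:ℝ) ≤ (K:ℝ) := le_of_lt hKR
      calc 2 * Real.log (4*(n:ℝ)/ε)
          = (256 * (n:ℝ)^2/ε^4 * Real.log (4*(n:ℝ)/ε)) * (ε^2/48) * m0 := by
            rw [hm0]
            have hne : (n:ℝ) ≠ 0 := by positivity
            field_simp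
            ring
        _ ≤ (K:ℝ) * (ε^2/48) * m0 := by
            apply mul_le_mul_of_nonneg_right _ (le_of_lt hm0pos)
            exact mul_le_mul_of_nonneg_right hKB (by positivity)
        _ ≤ (K:ℝ) * (ε^2/(3*(2+ε)^2)) * mm := by
            apply mul_le_mul
            · exact mul_le_mul_of_nonneg_left hc1 hKpos
            · exact hmm0
            · exact le_of_lt hm0pos
            · positivity
    calc ∑ v ∈ Finset.univ.filter
          (fun v : Fin K → Θ => 0 < ∑ k, φ' (v k) i * (r (v k) j - r (v k) i - ε)),
            ∏ k, lam (v k)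
        ≤ Real.exp (-((K : ℝ) * (ε^2/(3*(2+ε)^2)) * mm)) := hch
      _ ≤ Real.exp (-(2 * Real.log (4*(n:ℝ)/ε))) := by
          apply Real.exp_le_exp.2
          linarith
      _ = ε^2/(16*(n:ℝ)^2) := by
          have h1 : Real.exp (Real.log (4*(n:ℝ)/ε)) = 4*(n:ℝ)/ε :=
            Real.exp_log (by positivity)
          rw [show -(2 * Real.log (4*(n:ℝ)/ε))
              = -Real.log (4*(n:ℝ)/ε) + -Real.log (4*(n:ℝ)/ε) by ring,
            Real.exp_add, Real.exp_neg, h1]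
          have hne : (n:ℝ) ≠ 0 := by positivity
          have hεne : ε ≠ 0 := ne_of_gt hε
          field_simp
          ring
  -- union bound
  set P : (Fin K → Θ) → Prop := fun v => ∃ p : Fin n × Fin n, p.1 ∈ S ∧
    0 < ∑ k, φ' (v k) p.1 * (r (v k) p.2 - r (v k) p.1 - ε) with hPdef
  set C : (Fin n × Fin n) → (Fin K → Θ) → Prop := fun p v => p.1 ∈ S ∧
    0 < ∑ k, φ' (v k) p.1 * (r (v k) p.2 - r (v k) p.1 - ε) with hCdef
  have hPbound : ∑ v ∈ Finset.univ.filter P, ∏ k, lam (v k) ≤ ε^2/16 := by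
    have hnn : ∀ (v : Fin K → Θ) (p : Fin n × Fin n),
        (0:ℝ) ≤ (if C p v then ∏ k, lam (v k) else 0) := by
      intro v p
      split
      · exact hw0 v
      · exact le_refl 0
    calc ∑ v ∈ Finset.univ.filter P, ∏ k, lam (v k)
        ≤ ∑ v ∈ Finset.univ.filter P, ∑ p : Fin n × Fin n,
            (if C p v then ∏ k, lam (v k) else 0) := by
          apply Finset.sum_le_sum
          intro v hv
          obtain ⟨p0, hp0⟩ := (Finset.mem_filter.1 hv).2
          have h1 := Finset.single_le_sum (f := fun p => if C p v then ∏ k, lam (v k) else 0)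
            (fun p _ => hnn v p) (Finset.mem_univ p0)
          rwa [if_pos (show C p0 v from hp0)] at h1
      _ ≤ ∑ v : Fin K → Θ, ∑ p : Fin n × Fin n,
            (if C p v then ∏ k, lam (v k) else 0) :=
          Finset.sum_le_sum_of_subset_of_nonneg (Finset.filter_subset _ _)
            (fun v _ _ => Finset.sum_nonneg fun p _ => hnn v p)
      _ = ∑ p : Fin n × Fin n, ∑ v : Fin K → Θ,
            (if C p v then ∏ k, lam (v k) else 0) := Finset.sum_comm
      _ ≤ ∑ _p : Fin n × Fin n, ε^2/(16*(n:ℝ)^2) := by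
          apply Finset.sum_le_sum
          intro p _
          by_cases hpS : p.1 ∈ S
          · have e : ∀ v : Fin K → Θ, (if C p v then ∏ k, lam (v k) else 0)
                = (if 0 < ∑ k, φ' (v k) p.1 * (r (v k) p.2 - r (v k) p.1 - ε)
                    then ∏ k, lam (v k) else 0) := by
              intro v
              by_cases h : 0 < ∑ k, φ' (v k) p.1 * (r (v k) p.2 - r (v k) p.1 - ε)
              · rw [if_pos (show C p v from ⟨hpS, h⟩), if_pos h]
              · rw [if_neg (show ¬ C p v from fun hc => h hc.2), if_neg h]
            rw [Finset.sum_congr rfl fun v _ => e v, ← Finset.sum_filter]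
            exact hij p.1 hpS p.2
          · have e : ∀ v : Fin K → Θ, (if C p v then ∏ k, lam (v k) else 0) = 0 := by
              intro v
              exact if_neg (show ¬ C p v from fun hc => hpS hc.1)
            rw [Finset.sum_congr rfl fun v _ => e v, Finset.sum_const, smul_zero]
            positivity
      _ = ε^2/16 := by
          rw [Finset.sum_const, Finset.card_univ, nsmul_eq_mul]
          have : (Fintype.card (Fin n × Fin n) : ℝ) = (n:ℝ)^2 := by
            simp [Fintype.card_prod]
            ring
          rw [this]
          have hne : (n:ℝ) ≠ 0 := by positivity
          field_simp
  -- final assembly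
  have hsplitsum := Finset.sum_filter_add_sum_filter_not Finset.univ P
    (fun v => (∏ k, lam (v k)) * val v)
  have hbad : -(ε^2/16) ≤ ∑ v ∈ Finset.univ.filter P, (∏ k, lam (v k)) * val v := by
    have h1 : ∀ v ∈ Finset.univ.filter P, -(∏ k, lam (v k)) ≤ (∏ k, lam (v k)) * val v := by
      intro v _
      nlinarith [hval_neg1 v, hw0 v]
    calc -(ε^2/16) ≤ -(∑ v ∈ Finset.univ.filter P, ∏ k, lam (v k)) := by
          linarith [hPbound]
      _ = ∑ v ∈ Finset.univ.filter P, -(∏ k, lam (v k)) := by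
          rw [Finset.sum_neg_distrib]
      _ ≤ _ := Finset.sum_le_sum h1
  have hu'le : ∀ v : Fin K → Θ, (1/(K:ℝ)) * ∑ k, Hp (v k) ≤ 1 := by
    intro v
    have h1 : ∑ k, Hp (v k) ≤ (K:ℝ) := by
      calc ∑ k, Hp (v k) ≤ ∑ _k : Fin K, (1:ℝ) := Finset.sum_le_sum fun k _ => hHple1 (v k)
        _ = (K:ℝ) := by simp
    calc (1/(K:ℝ)) * ∑ k, Hp (v k) ≤ (1/(K:ℝ)) * (K:ℝ) :=
          mul_le_mul_of_nonneg_left h1 (by positivity)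
      _ = 1 := by field_simp
  have hgood : ∀ v ∈ Finset.univ.filter (fun v => ¬ P v),
      (∏ k, lam (v k)) * ((1/(K:ℝ)) * ∑ k, Hp (v k)) ≤ (∏ k, lam (v k)) * val v := by
    intro v hv
    have hnP : ¬ P v := (Finset.mem_filter.1 hv).2
    have hic : ∀ i j : Fin n, ∑ k, φ' (v k) i * (r (v k) j - r (v k) i - ε) ≤ 0 := by
      intro i j
      by_cases hiS : i ∈ S
      · by_contra hcon
        push_neg at hcon
        exact hnP ⟨(i, j), hiS, hcon⟩
      · apply Finset.sum_nonpos
        intro k _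
        have h0 : φ' (v k) i = small (v k) * (if br (v k) = i then 1 else 0) := by
          rw [hφ']
          simp [hiS]
        by_cases hb : br (v k) = i
        · have hri : r (v k) j ≤ r (v k) i := by rw [← hb]; exact hbr (v k) j
          have h5 : 0 ≤ φ' (v k) i := hφ'0 (v k) i
          nlinarith
        · rw [h0, if_neg hb, mul_zero, zero_mul]
    have hval' := hval_ge φ' hφ'0 hφ'sum v hic
    exact mul_le_mul_of_nonneg_left hval' (hw0 v)
  have hgoodsum : ∑ θ, lam θ * Hp θ - ε^2/16
      ≤ ∑ v ∈ Finset.univ.filter (fun v => ¬ P v), (∏ k, lam (v k)) * val v := by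
    have h1 := Finset.sum_filter_add_sum_filter_not Finset.univ P
      (fun v : Fin K → Θ => (∏ k, lam (v k)) * ((1/(K:ℝ)) * ∑ k, Hp (v k)))
    have h2 : ∑ v : Fin K → Θ, (∏ k, lam (v k)) * ((1/(K:ℝ)) * ∑ k, Hp (v k))
        = ∑ θ, lam θ * Hp θ := hexp_util Hp
    have h3 : ∑ v ∈ Finset.univ.filter P, (∏ k, lam (v k)) * ((1/(K:ℝ)) * ∑ k, Hp (v k))
        ≤ ε^2/16 := by
      calc ∑ v ∈ Finset.univ.filter P, (∏ k, lam (v k)) * ((1/(K:ℝ)) * ∑ k, Hp (v k))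
          ≤ ∑ v ∈ Finset.univ.filter P, ∏ k, lam (v k) :=
            Finset.sum_le_sum fun v _ => mul_le_of_le_one_right (hw0 v) (hu'le v)
        _ ≤ ε^2/16 := hPbound
    have h4 := Finset.sum_le_sum hgood
    linarith
  have hnum : 2*(n:ℝ)*m0 ≤ 3*ε^2/8 := by
    have hn0 : (0:ℝ) < n := by linarith
    have e : 2*(n:ℝ)*m0 = 3*ε^2/(4*(n:ℝ)) := by
      rw [hm0]
      field_simp
      ring
    rw [e]
    apply div_le_div_of_nonneg_left (by positivity) (by norm_num)
    linarith
  have hfin : OPT - ε ≤ ∑ θ, lam θ * Hp θ - ε^2/16 - ε^2/16 := by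
    nlinarith [hutil, hε, hε2]
  linarith [hbad, hgoodsum, hsplitsum, hfin]
end

section
/- Consider the two-action, two-state persuasion instance parametrized by δ ∈ (0,1): states are 'rainy' and 'sunny'; the receiver's payoffs are r_walk(rainy) = 1−δ, r_walk(sunny) = 1, r_drive(rainy) = 1, r_drive(sunny) = 0; the sender's payoffs are s_walk = 1 and s_drive = 0 in both states. Let λ_r be the point distribution on 'rainy' and let λ_s satisfy λ_s(rainy) = 1/(1+2δ) and λ_s(sunny) = 2δ/(1+2δ). Then: (i) every incentive-compatible direct scheme for λ_r recommends 'drive' with probability 1, so every IC scheme has expected sender utility 0 under λ_r; (ii) the scheme that always recommends 'walk' is incentive compatible for λ_s and has expected sender utility 1; and (iii) the total variation distance between λ_r and λ_s equals 2δ/(1+2δ). -/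
open Finset

namespace RainShine

-- states: `true` = rainy, `false` = sunny; actions: `true` = walk, `false` = drive

/-- receiver payoffs: walking gives `1 − δ` on a rainy day and `1` on a sunny day;
driving gives `1` on a rainy day and `0` on a sunny day -/
noncomputable def rcv (δ : ℝ) (θ : Bool) (i : Bool) : ℝ :=
  if i then (if θ then 1 - δ else 1) else (if θ then 1 else 0)

/-- sender payoffs: walking gives `1`, driving gives `0`, in both states -/
def snd (_θ : Bool) (i : Bool) : ℝ := if i then 1 else 0

/-- the point distribution on the rainy state -/
def lamR : Bool → ℝ := fun θ => if θ then 1 else 0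

/-- the distribution with `λ_s(rainy) = 1/(1+2δ)` and `λ_s(sunny) = 2δ/(1+2δ)` -/
noncomputable def lamS (δ : ℝ) : Bool → ℝ :=
  fun θ => if θ then 1 / (1 + 2 * δ) else 2 * δ / (1 + 2 * δ)

/-- a direct signaling scheme (signal `true` recommends walking,
signal `false` recommends driving) -/
def IsScheme (φ : Bool → Bool → ℝ) : Prop :=
  (∀ θ i, 0 ≤ φ θ i) ∧ ∀ θ, ∑ i, φ θ i = 1

/-- incentive compatibility for the distribution `μ` -/
def IC (δ : ℝ) (μ : Bool → ℝ) (φ : Bool → Bool → ℝ) : Prop :=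
  ∀ i j : Bool, ∑ θ, μ θ * φ θ i * rcv δ θ j ≤ ∑ θ, μ θ * φ θ i * rcv δ θ i

/-- expected sender utility -/
def senderUtil (μ : Bool → ℝ) (φ : Bool → Bool → ℝ) : ℝ :=
  ∑ θ, ∑ i, μ θ * φ θ i * snd θ i

end RainShine

namespace RainShine

variable {δ : ℝ}

lemma sum_lamR_mul (f : Bool → ℝ) : ∑ θ, lamR θ * f θ = f true := by
  simp [lamR]

lemma senderUtil_lamR (φ : Bool → Bool → ℝ) : senderUtil lamR φ = φ true true := by
  simp [senderUtil, lamR, snd]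

lemma IsScheme.apply_false_eq {φ : Bool → Bool → ℝ} (hφ : IsScheme φ) (θ : Bool) :
    φ θ false = 1 - φ θ true := by
  linarith [Fintype.sum_bool (φ θ) ▸ hφ.2 θ]

/-- Under the point prior on rain, obeying "walk" costs the receiver `δ` per unit of
probability, so an IC scheme never recommends walking. -/
lemma IC.lamR_walk_eq_zero {φ : Bool → Bool → ℝ} (hδ : 0 < δ) (hφ : IsScheme φ)
    (hic : IC δ lamR φ) : φ true true = 0 := by
  have hobey := hic true false
  simp only [lamR, rcv, Fintype.sum_bool] at hobey
  norm_num at hobey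
  nlinarith [hφ.1 true true]

def recommend (a : Bool) : Bool → Bool → ℝ := fun _ i => if i = a then 1 else 0

lemma isScheme_recommend (a : Bool) : IsScheme (recommend a) := by
  refine ⟨fun _ i => ?_, fun _ => ?_⟩
  · simp only [recommend]
    split <;> norm_num
  · cases a <;> simp [recommend]

lemma ic_recommend_iff (μ : Bool → ℝ) (a : Bool) :
    IC δ μ (recommend a) ↔ ∀ j, ∑ θ, μ θ * rcv δ θ j ≤ ∑ θ, μ θ * rcv δ θ a := by
  constructor
  · intro hic j
    simpa [recommend] using hic a j
  · intro hobey i j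
    by_cases hi : i = a
    · subst hi
      simpa [recommend] using hobey j
    · simp [recommend, hi]

lemma senderUtil_recommend_true (μ : Bool → ℝ) :
    senderUtil μ (recommend true) = ∑ θ, μ θ := by
  simp [senderUtil, recommend, snd]

lemma lamS_nonneg (hδ : 0 ≤ δ) (θ : Bool) : 0 ≤ lamS δ θ := by
  cases θ <;> simp only [lamS] <;> positivity

lemma lamS_true_add_lamS_false (hδ : 0 ≤ δ) : lamS δ true + lamS δ false = 1 := by
  simp only [lamS, ↓reduceIte, Bool.false_eq_true]
  field_simp

lemma obedient_walk_lamS (hδ : 0 ≤ δ) (j : Bool) :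
    ∑ θ, lamS δ θ * rcv δ θ j ≤ ∑ θ, lamS δ θ * rcv δ θ true := by
  cases j
  · simp only [lamS, rcv, Fintype.sum_bool, ↓reduceIte, Bool.false_eq_true]
    field_simp
    linarith
  · rfl

lemma tv_lamR_eq (ν : Bool → ℝ) (hν : ∀ θ, 0 ≤ ν θ) (hsum : ν true + ν false = 1) :
    (1 / 2) * ∑ θ, |lamR θ - ν θ| = ν false := by
  simp only [lamR, Fintype.sum_bool, if_true, Bool.false_eq_true, if_false, zero_sub, abs_neg]
  rw [abs_of_nonneg (by linarith [hν false]), abs_of_nonneg (hν false)]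
  linarith

end RainShine

open RainShine

theorem rain_shine_instance_general (δ : ℝ) (hδ0 : 0 < δ) :
    (∀ φ : Bool → Bool → ℝ, IsScheme φ → IC δ lamR φ →
      (∑ θ, lamR θ * φ θ true) = 0 ∧
      (∑ θ, lamR θ * φ θ false) = 1 ∧
      senderUtil lamR φ = 0) ∧
    (IsScheme (fun _ i => if i then 1 else 0) ∧
      IC δ (lamS δ) (fun _ i => if i then 1 else 0) ∧
      senderUtil (lamS δ) (fun _ i => if i then 1 else 0) = 1) ∧
    (1 / 2) * ∑ θ, |lamR θ - lamS δ θ| = 2 * δ / (1 + 2 * δ) := by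
  refine ⟨fun φ hφ hic => ?_, ⟨isScheme_recommend true, ?_, ?_⟩, ?_⟩
  · have hwalk := hic.lamR_walk_eq_zero hδ0 hφ
    simp only [sum_lamR_mul, senderUtil_lamR, hφ.apply_false_eq, hwalk]
    norm_num
  · exact (ic_recommend_iff _ true).2 (obedient_walk_lamS hδ0.le)
  · exact (senderUtil_recommend_true _).trans
      (Fintype.sum_bool (lamS δ) ▸ lamS_true_add_lamS_false hδ0.le)
  · exact tv_lamR_eq _ (lamS_nonneg hδ0.le) (lamS_true_add_lamS_false hδ0.le)

/-- in the rain-and-shine instance with parameter `δ ∈ (0,1)`: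
(i) every incentive-compatible direct scheme for `λ_r` recommends driving with
probability `1` and has expected sender utility `0`; (ii) always recommending walking
is incentive compatible for `λ_s` and has expected sender utility `1`; and (iii) the
total variation distance between `λ_r` and `λ_s` equals `2δ/(1+2δ)`. -/
theorem rain_shine_instance (δ : ℝ) (hδ0 : 0 < δ) (hδ1 : δ < 1) :
    (∀ φ : Bool → Bool → ℝ, IsScheme φ → IC δ lamR φ →
      (∑ θ, lamR θ * φ θ true) = 0 ∧
      (∑ θ, lamR θ * φ θ false) = 1 ∧
      senderUtil lamR φ = 0) ∧
    (IsScheme (fun _ i => if i then 1 else 0) ∧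
      IC δ (lamS δ) (fun _ i => if i then 1 else 0) ∧
      senderUtil (lamS δ) (fun _ i => if i then 1 else 0) = 1) ∧
    (1 / 2) * ∑ θ, |lamR θ - lamS δ θ| = 2 * δ / (1 + 2 * δ) :=
  rain_shine_instance_general δ hδ0
end
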